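/- Assume the network graph is connected and acyclic (ker A = {0} and ker Aᵀ = span{1_{n+m}}) and Σ_{i=1}^{n+m} P_i = 0. Fix v ∈ ℝⁿ with strictly positive entries and set V_L := diag(V_L*) v. Then the following are equivalent: (i) there exists θ ∈ ℝ^{n+m} with |(Aᵀθ)_e| ≤ π/2 for every edge e such that (θ, V_L) solves the power flow equations P_i = Σ_j V_iV_jB_{ij} sin(θ_i − θ_j) for all buses i and Q_i = −Σ_j V_iV_jB_{ij} cos(θ_i − θ_j) for all load buses i; (ii) |ψ(v)_e| ≤ 1 for every edge e and f(v) = v. Moreover, any θ as in (i) satisfies sin((Aᵀθ)_e) = ψ(v)_e for every edge e. -/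

import Mathlib

open Matrix BigOperators

noncomputable section

/-- Buses `a` and `b` are joined by a branch. -/
def busJoined {n m E : ℕ} (src tgt : Fin E → Fin n ⊕ Fin m)
    (a b : Fin n ⊕ Fin m) : Prop :=
  ∃ e : Fin E, (src e = a ∧ tgt e = b) ∨ (src e = b ∧ tgt e = a)

/-- The load–load block of the susceptance matrix. -/
def BLL {n m : ℕ} (B : Matrix (Fin n ⊕ Fin m) (Fin n ⊕ Fin m) ℝ) :
    Matrix (Fin n) (Fin n) ℝ :=
  Matrix.of fun i j => B (Sum.inl i) (Sum.inl j)

/-- The load–generator block of the susceptance matrix. -/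
def BLG {n m : ℕ} (B : Matrix (Fin n ⊕ Fin m) (Fin n ⊕ Fin m) ℝ) :
    Matrix (Fin n) (Fin m) ℝ :=
  Matrix.of fun i j => B (Sum.inl i) (Sum.inr j)

/-- Open-circuit load voltages  V_L* = −B_LL⁻¹ B_LG V_G. -/
def VLstar {n m : ℕ} (B : Matrix (Fin n ⊕ Fin m) (Fin n ⊕ Fin m) ℝ)
    (VG : Fin m → ℝ) : Fin n → ℝ :=
  -((BLL B)⁻¹.mulVec ((BLG B).mulVec VG))

/-- Open-circuit voltage profile on all buses: V_L* on loads, V_G on generators. -/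
def Vstar {n m : ℕ} (B : Matrix (Fin n ⊕ Fin m) (Fin n ⊕ Fin m) ℝ)
    (VG : Fin m → ℝ) : Fin n ⊕ Fin m → ℝ :=
  Sum.elim (VLstar B VG) VG

/-- Oriented node–edge incidence matrix: +1 at the source, −1 at the target. -/
def incA {n m E : ℕ} (src tgt : Fin E → Fin n ⊕ Fin m) :
    Matrix (Fin n ⊕ Fin m) (Fin E) ℝ :=
  Matrix.of fun a e => if src e = a then 1 else if tgt e = a then -1 else 0

/-- Load-bus rows of the unsigned incidence matrix |A|_L. -/
def absAL {n m E : ℕ} (src tgt : Fin E → Fin n ⊕ Fin m) :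
    Matrix (Fin n) (Fin E) ℝ :=
  Matrix.of fun i e => |incA src tgt (Sum.inl i) e|

/-- Branch stiffness matrix D = diag(V*_{s(e)} V*_{t(e)} B_{s(e)t(e)}). -/
def Dmat {n m E : ℕ} (B : Matrix (Fin n ⊕ Fin m) (Fin n ⊕ Fin m) ℝ)
    (VG : Fin m → ℝ) (src tgt : Fin E → Fin n ⊕ Fin m) :
    Matrix (Fin E) (Fin E) ℝ :=
  Matrix.diagonal fun e => Vstar B VG (src e) * Vstar B VG (tgt e) * B (src e) (tgt e)

/-- Nodal stiffness matrix S = ¼ diag(V_L*) B_LL diag(V_L*). -/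
def Smat {n m : ℕ} (B : Matrix (Fin n ⊕ Fin m) (Fin n ⊕ Fin m) ℝ)
    (VG : Fin m → ℝ) : Matrix (Fin n) (Fin n) ℝ :=
  (4⁻¹ : ℝ) • (Matrix.diagonal (VLstar B VG) * BLL B * Matrix.diagonal (VLstar B VG))

/-- The edge nonlinearity h(v): v_s v_t on load–load branches, v_t on
generator–load branches, and 1 on generator–generator branches. -/
def hvec {n m E : ℕ} (src tgt : Fin E → Fin n ⊕ Fin m) (v : Fin n → ℝ) :
    Fin E → ℝ := fun e =>
  match src e, tgt e with
  | Sum.inl i, Sum.inl j => v i * v j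
  | Sum.inr _, Sum.inl j => v j
  | Sum.inl i, Sum.inr _ => v i
  | Sum.inr _, Sum.inr _ => 1

/-- Branch active power flows p = (AᵀA)⁻¹AᵀP for a radial network. -/
def pflow {n m E : ℕ} (src tgt : Fin E → Fin n ⊕ Fin m)
    (P : Fin n ⊕ Fin m → ℝ) : Fin E → ℝ :=
  (((incA src tgt)ᵀ * incA src tgt)⁻¹ * (incA src tgt)ᵀ).mulVec P

/-- ψ(v) = diag(h(v))⁻¹ D⁻¹ p. -/
def psif {n m E : ℕ} (B : Matrix (Fin n ⊕ Fin m) (Fin n ⊕ Fin m) ℝ)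
    (VG : Fin m → ℝ) (src tgt : Fin E → Fin n ⊕ Fin m)
    (P : Fin n ⊕ Fin m → ℝ) (v : Fin n → ℝ) : Fin E → ℝ :=
  ((Matrix.diagonal (hvec src tgt v))⁻¹ * (Dmat B VG src tgt)⁻¹).mulVec (pflow src tgt P)

/-- u(v)_e = 1 − √(1 − ψ(v)_e²). -/
def uvec {n m E : ℕ} (B : Matrix (Fin n ⊕ Fin m) (Fin n ⊕ Fin m) ℝ)
    (VG : Fin m → ℝ) (src tgt : Fin E → Fin n ⊕ Fin m)
    (P : Fin n ⊕ Fin m → ℝ) (v : Fin n → ℝ) : Fin E → ℝ :=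
  fun e => 1 - Real.sqrt (1 - (psif B VG src tgt P v e) ^ 2)

/-- The fixed-point power flow map
f(v) = 1 − ¼S⁻¹ diag(Q_L) diag(v)⁻¹ 1 + ¼S⁻¹ diag(v)⁻¹ |A|_L D diag(h(v)) u(v). -/
def fppf {n m E : ℕ} (B : Matrix (Fin n ⊕ Fin m) (Fin n ⊕ Fin m) ℝ)
    (VG : Fin m → ℝ) (src tgt : Fin E → Fin n ⊕ Fin m)
    (P : Fin n ⊕ Fin m → ℝ) (QL : Fin n → ℝ) (v : Fin n → ℝ) : Fin n → ℝ :=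
  (fun _ => (1 : ℝ))
    - (4⁻¹ : ℝ) •
      (((Smat B VG)⁻¹ * Matrix.diagonal QL * (Matrix.diagonal v)⁻¹).mulVec fun _ => (1 : ℝ))
    + (4⁻¹ : ℝ) •
      (((Smat B VG)⁻¹ * (Matrix.diagonal v)⁻¹ * absAL src tgt * Dmat B VG src tgt *
          Matrix.diagonal (hvec src tgt v)).mulVec (uvec B VG src tgt P v))

end

/-!
On a tree the incidence matrix `A` is injective and `ker Aᵀ` consists of the constants, so `A p = P`
and the active balance `P = A q`, with branch flows `q_e = V_s V_t B_st sin (Aᵀθ)_e`, forces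
`q = p`. Since `V_s V_t B_st = D_e h(v)_e`, this says exactly `sin (Aᵀθ)_e = ψ(v)_e`; conversely
any `ψ` with `|ψ| ≤ 1` is realised by the `θ` with `Aᵀθ = arcsin ψ`, as `Aᵀ` is surjective. For
angle differences in `[-π/2, π/2]` we get `1 - cos (Aᵀθ)_e = u(v)_e`, and writing
`cos = 1 - (1 - cos)` in the reactive balance turns it into `f(v) = v`. All divisions are by
positive quantities because `V_L* > 0`.
-/

open Matrix Real

section ZMatrix

variable {ι : Type*} [Fintype ι] {M : Matrix ι ι ℝ}

theorem Matrix.PosDef.nonneg_of_mulVec_nonneg (hM : M.PosDef) (hoff : ∀ i j, i ≠ j → M i j ≤ 0)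
    {x : ι → ℝ} (hx : 0 ≤ M *ᵥ x) : 0 ≤ x := by
  set y : ι → ℝ := fun i => min (x i) 0
  set z : ι → ℝ := fun i => max (x i) 0
  have hxyz : x = y + z := funext fun i => by simp only [y, z, Pi.add_apply, min_add_max, add_zero]
  have hyx : y ⬝ᵥ (M *ᵥ x) ≤ 0 :=
    Finset.sum_nonpos fun i _ => mul_nonpos_of_nonpos_of_nonneg (min_le_right _ _) (hx i)
  have hyz : 0 ≤ y ⬝ᵥ (M *ᵥ z) := by
    simp only [dotProduct, mulVec, Finset.mul_sum]
    refine Finset.sum_nonneg fun i _ => Finset.sum_nonneg fun j _ => ?_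
    rcases eq_or_ne i j with rfl | hij
    · have hyzi : y i * z i = 0 := by
        rcases le_total (x i) 0 with h | h <;> simp [y, z, h]
      rw [mul_left_comm, hyzi, mul_zero]
    · exact mul_nonneg_of_nonpos_of_nonpos (min_le_right _ _)
        (mul_nonpos_of_nonpos_of_nonneg (hoff i j hij) (le_max_right _ _))
  -- `yᵀ M y = yᵀ M x - yᵀ M z ≤ 0` for the negative part `y` of `x`
  have hy : y = 0 := by
    by_contra hy
    have hpos := hM.dotProduct_mulVec_pos hy
    rw [star_trivial, show M *ᵥ y = M *ᵥ x - M *ᵥ z by rw [hxyz, mulVec_add, add_sub_cancel_right],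
      dotProduct_sub] at hpos
    linarith
  exact fun i => min_eq_right_iff.mp (congrFun hy i)

theorem mul_eq_zero_of_mulVec_apply_nonneg (hoff : ∀ i j, i ≠ j → M i j ≤ 0) {x : ι → ℝ}
    (hx : 0 ≤ x) {i : ι} (hxi : x i = 0) (hMx : 0 ≤ (M *ᵥ x) i) (j : ι) : M i j * x j = 0 := by
  have hterm : ∀ j ∈ Finset.univ, M i j * x j ≤ 0 := fun j _ => by
    rcases eq_or_ne i j with rfl | hij
    · rw [hxi, mul_zero]
    · exact mul_nonpos_of_nonpos_of_nonneg (hoff i j hij) (hx j)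
  exact (Finset.sum_eq_zero_iff_of_nonpos hterm).1 (le_antisymm (Finset.sum_nonpos hterm) hMx) j
    (Finset.mem_univ j)

end ZMatrix

section FullColumnRank

variable {ι κ : Type*} [Fintype ι] [Fintype κ] [DecidableEq κ] {A : Matrix ι κ ℝ}

theorem isUnit_det_transpose_mul_self (hA : Function.Injective A.mulVec) : IsUnit (Aᵀ * A).det :=
  (isUnit_iff_isUnit_det _).1 (by simpa using (PosDef.conjTranspose_mul_self A hA).isUnit)

theorem transpose_mulVec_surjective (hA : Function.Injective A.mulVec) :
    Function.Surjective Aᵀ.mulVec := fun δ =>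
  ⟨A *ᵥ ((Aᵀ * A)⁻¹ *ᵥ δ), by
    rw [mulVec_mulVec, mulVec_mulVec, mul_nonsing_inv _ (isUnit_det_transpose_mul_self hA),
      one_mulVec]⟩

end FullColumnRank

theorem eq_zero_of_eq_const_of_sum_eq_zero {ι : Type*} [Fintype ι] {x : ι → ℝ} {c : ℝ}
    (hc : x = fun _ => c) (hsum : ∑ i, x i = 0) : x = 0 := by
  funext i
  have : Nonempty ι := ⟨i⟩
  have : (Fintype.card ι : ℝ) ≠ 0 := Nat.cast_ne_zero.2 Fintype.card_ne_zero
  simp only [hc, Finset.sum_const, Finset.card_univ, nsmul_eq_mul, mul_eq_zero, this,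
    false_or] at hsum
  simp [hc, hsum]

theorem inv_diagonal_of_ne_zero {ι : Type*} [Fintype ι] [DecidableEq ι] {d : ι → ℝ}
    (hd : ∀ i, d i ≠ 0) : (diagonal d)⁻¹ = diagonal d⁻¹ :=
  inv_eq_right_inv (by rw [diagonal_mul_diagonal, ← diagonal_one]; congr 1; ext i; simp [hd i])

theorem one_add_smul_inv_mulVec_eq_iff {ι : Type*} [Fintype ι] [DecidableEq ι] {S : Matrix ι ι ℝ}
    (hS : IsUnit S.det) {c : ℝ} (hc : c ≠ 0) {w v : ι → ℝ} :
    1 + c • (S⁻¹ *ᵥ w) = v ↔ w = c⁻¹ • (S *ᵥ (v - 1)) := by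
  rw [← eq_sub_iff_add_eq', ← eq_inv_smul_iff₀ hc, ← mulVec_smul]
  constructor
  · rintro h; rw [← h, mulVec_mulVec, mul_nonsing_inv _ hS, one_mulVec]
  · rintro rfl; rw [mulVec_mulVec, nonsing_inv_mul _ hS, one_mulVec]

theorem diagonal_mulVec_eq_mul {ι : Type*} [Fintype ι] [DecidableEq ι] (d w : ι → ℝ) :
    diagonal d *ᵥ w = d * w :=
  funext (mulVec_diagonal d w)

theorem one_sub_cos_eq_sqrt {δ ψ : ℝ} (hδ : |δ| ≤ π / 2) (hsin : sin δ = ψ) :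
    1 - cos δ = 1 - √(1 - ψ ^ 2) := by
  rw [← hsin, cos_eq_sqrt_one_sub_sin_sq (abs_le.1 hδ).1 (abs_le.1 hδ).2]

section Network

variable {n m E : ℕ} {B : Matrix (Fin n ⊕ Fin m) (Fin n ⊕ Fin m) ℝ} {VG : Fin m → ℝ}
  {src tgt : Fin E → Fin n ⊕ Fin m}

theorem busJoined_comm {a b : Fin n ⊕ Fin m} :
    busJoined src tgt a b ↔ busJoined src tgt b a :=
  exists_congr fun _ => or_comm

theorem busJoined_src_tgt (e : Fin E) : busJoined src tgt (src e) (tgt e) :=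
  ⟨e, Or.inl ⟨rfl, rfl⟩⟩

theorem incA_transpose_mulVec_apply (hne : ∀ e, src e ≠ tgt e) (θ : Fin n ⊕ Fin m → ℝ)
    (e : Fin E) : ((incA src tgt)ᵀ *ᵥ θ) e = θ (src e) - θ (tgt e) := by
  have key : ∀ a, incA src tgt a e * θ a
      = (if src e = a then θ a else 0) - (if tgt e = a then θ a else 0) := fun a => by
    have := hne e
    simp only [incA, of_apply]
    split_ifs <;> simp_all
  simp [mulVec, dotProduct, key, Finset.sum_sub_distrib]

theorem iff_of_forall_busJoined_iff (hne : ∀ e, src e ≠ tgt e)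
    (hconn : ∀ x : Fin n ⊕ Fin m → ℝ, (incA src tgt)ᵀ *ᵥ x = 0 ↔ ∃ c : ℝ, x = fun _ => c)
    {Z : Fin n ⊕ Fin m → Prop} (hZ : ∀ a b, busJoined src tgt a b → (Z a ↔ Z b))
    (a b : Fin n ⊕ Fin m) : Z a ↔ Z b := by
  classical
  let w : Fin n ⊕ Fin m → ℝ := fun a => if Z a then 1 else 0
  have hw : (incA src tgt)ᵀ *ᵥ w = 0 := funext fun e => by
    rw [incA_transpose_mulVec_apply hne, Pi.zero_apply, sub_eq_zero]
    simp only [w, hZ _ _ (busJoined_src_tgt e)]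
  obtain ⟨c, hc⟩ := (hconn w).1 hw
  have hab : w a = w b := by rw [hc]
  by_cases ha : Z a <;> by_cases hb : Z b <;> simp [w, ha, hb] at hab ⊢

theorem susceptance_nonneg_of_ne (hBpos : ∀ a b, busJoined src tgt a b → 0 < B a b)
    (hBzero : ∀ a b, a ≠ b → ¬ busJoined src tgt a b → B a b = 0) {a b : Fin n ⊕ Fin m}
    (h : a ≠ b) : 0 ≤ B a b := by
  by_cases hj : busJoined src tgt a b
  · exact (hBpos a b hj).le
  · exact (hBzero a b h hj).ge

theorem isUnit_det_BLL (hBLL : (-(BLL B)).PosDef) : IsUnit (BLL B).det :=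
  (isUnit_iff_isUnit_det _).1 (by simpa using hBLL.isUnit.neg)

theorem BLL_mulVec_VLstar (hBLL : (-(BLL B)).PosDef) :
    BLL B *ᵥ VLstar B VG = -(BLG B *ᵥ VG) := by
  rw [VLstar, mulVec_neg, mulVec_mulVec, mul_nonsing_inv _ (isUnit_det_BLL hBLL), one_mulVec]

/-- An M-matrix argument: `-B_LL` is a positive definite Z-matrix and `-B_LL V_L* = B_LG V_G ≥ 0`,
so `V_L* ≥ 0`; a zero entry would propagate along branches and reach a generator. -/
theorem VLstar_pos (hm : 0 < m) (hne : ∀ e, src e ≠ tgt e)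
    (hBpos : ∀ a b, busJoined src tgt a b → 0 < B a b)
    (hBzero : ∀ a b, a ≠ b → ¬ busJoined src tgt a b → B a b = 0)
    (hBLL : (-(BLL B)).PosDef) (hVG : ∀ j, 0 < VG j)
    (hconn : ∀ x : Fin n ⊕ Fin m → ℝ, (incA src tgt)ᵀ *ᵥ x = 0 ↔ ∃ c : ℝ, x = fun _ => c)
    (i : Fin n) : 0 < VLstar B VG i := by
  set x := VLstar B VG
  have hoff : ∀ i j, i ≠ j → (-(BLL B)) i j ≤ 0 := fun i j h =>
    neg_nonpos.2 (susceptance_nonneg_of_ne hBpos hBzero (Sum.inl_injective.ne h))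
  have hBLG : ∀ i g, 0 ≤ B (Sum.inl i) (Sum.inr g) * VG g := fun i g =>
    mul_nonneg (susceptance_nonneg_of_ne hBpos hBzero Sum.inl_ne_inr) (hVG g).le
  have hMx : ∀ i, ((-(BLL B)) *ᵥ x) i = ∑ g, B (Sum.inl i) (Sum.inr g) * VG g := fun i => by
    rw [neg_mulVec, BLL_mulVec_VLstar hBLL, neg_neg]; rfl
  have hr : 0 ≤ (-(BLL B)) *ᵥ x := fun i => by
    rw [Pi.zero_apply, hMx i]; exact Finset.sum_nonneg fun g _ => hBLG i g
  have hx : 0 ≤ x := hBLL.nonneg_of_mulVec_nonneg hoff hr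
  have hzero : ∀ i, x i = 0 → ∀ b, busJoined src tgt (Sum.inl i) b →
      ∃ j, b = Sum.inl j ∧ x j = 0 := by
    intro i hxi b hib
    have hterm := mul_eq_zero_of_mulVec_apply_nonneg hoff hx hxi (hr i)
    rcases b with j | g
    · exact ⟨j, rfl, (mul_eq_zero.1 (hterm j)).resolve_left (neg_ne_zero.2 (hBpos _ _ hib).ne')⟩
    · have h0 : ∑ g, B (Sum.inl i) (Sum.inr g) * VG g = 0 := by
        rw [← hMx i]; simp only [mulVec, dotProduct, hterm, Finset.sum_const_zero]
      have hg := (Finset.sum_eq_zero_iff_of_nonneg fun g _ => hBLG i g).1 h0 g (Finset.mem_univ g)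
      exact absurd ((mul_eq_zero.1 hg).resolve_right (hVG g).ne') (hBpos _ _ hib).ne'
  have hconst := iff_of_forall_busJoined_iff hne hconn
    (Z := fun a => ∃ i, a = Sum.inl i ∧ x i = 0) fun a b hab => by
      constructor
      · rintro ⟨i, rfl, hxi⟩; exact hzero i hxi b hab
      · rintro ⟨i, rfl, hxi⟩; exact hzero i hxi a (busJoined_comm.1 hab)
  refine (hx i).lt_of_ne' fun hxi => ?_
  obtain ⟨j, hj, -⟩ := (hconst (Sum.inl i) (Sum.inr ⟨0, hm⟩)).1 ⟨i, rfl, hxi⟩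
  exact Sum.inr_ne_inl hj

theorem incA_mulVec_injective (hacyclic : ∀ p : Fin E → ℝ, incA src tgt *ᵥ p = 0 → p = 0) :
    Function.Injective (incA src tgt).mulVec := fun p q h =>
  sub_eq_zero.1 (hacyclic _ (by rw [mulVec_sub, h, sub_self]))

theorem incA_mulVec_pflow (hacyclic : ∀ p : Fin E → ℝ, incA src tgt *ᵥ p = 0 → p = 0)
    (hconn : ∀ x : Fin n ⊕ Fin m → ℝ, (incA src tgt)ᵀ *ᵥ x = 0 ↔ ∃ c : ℝ, x = fun _ => c)
    {P : Fin n ⊕ Fin m → ℝ} (hP : ∑ a, P a = 0) : incA src tgt *ᵥ pflow src tgt P = P := by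
  set A := incA src tgt
  have hker : Aᵀ *ᵥ (P - A *ᵥ pflow src tgt P) = 0 := by
    rw [mulVec_sub, pflow, mulVec_mulVec, mulVec_mulVec, ← Matrix.mul_assoc,
      mul_nonsing_inv _ (isUnit_det_transpose_mul_self (incA_mulVec_injective hacyclic)),
      Matrix.one_mul, sub_self]
  have hsum : ∑ a, (A *ᵥ pflow src tgt P) a = 0 :=
    calc ∑ a, (A *ᵥ pflow src tgt P) a = (fun _ => 1) ⬝ᵥ (A *ᵥ pflow src tgt P) := by
          simp [dotProduct]
      _ = (Aᵀ *ᵥ fun _ => 1) ⬝ᵥ pflow src tgt P := by rw [dotProduct_mulVec, mulVec_transpose]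
      _ = 0 := by rw [(hconn _).2 ⟨1, rfl⟩, zero_dotProduct]
  obtain ⟨c, hc⟩ := (hconn _).1 hker
  have := eq_zero_of_eq_const_of_sum_eq_zero hc (by simp [Finset.sum_sub_distrib, hP, hsum])
  exact (sub_eq_zero.1 this).symm

theorem sum_eq_sum_incident (hne : ∀ e, src e ≠ tgt e)
    (huniq : ∀ e f : Fin E,
      ((src e = src f ∧ tgt e = tgt f) ∨ (src e = tgt f ∧ tgt e = src f)) → e = f)
    (a : Fin n ⊕ Fin m) (F : Fin n ⊕ Fin m → ℝ) (hF : ∀ b, F b ≠ 0 → busJoined src tgt a b) :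
    ∑ e, (if src e = a then F (tgt e) else if tgt e = a then F (src e) else 0) = ∑ b, F b := by
  refine Finset.sum_bij_ne_zero (fun e _ _ => if src e = a then tgt e else src e)
    (fun _ _ _ => Finset.mem_univ _) ?_ ?_ ?_
  · intro e₁ _ h₁ e₂ _ h₂ heq
    apply huniq
    by_cases hs₁ : src e₁ = a <;> by_cases hs₂ : src e₂ = a <;> simp_all
  · intro b _ hb
    obtain ⟨e, ⟨hs, ht⟩ | ⟨hs, ht⟩⟩ := hF b hb
    · exact ⟨e, Finset.mem_univ _, by simp [hs, ht, hb], by simp [hs, ht]⟩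
    · have hsa : src e ≠ a := fun h => hne e (h.trans ht.symm)
      subst hs
      exact ⟨e, Finset.mem_univ _, by simp [hsa, ht, hb], by simp [hsa]⟩
  · intro e _ he
    by_cases hs : src e = a
    · simp [hs]
    · by_cases ht : tgt e = a
      · simp [hs, ht]
      · simp [hs, ht] at he

theorem busJoined_of_mul_ne_zero
    (hBzero : ∀ a b, a ≠ b → ¬ busJoined src tgt a b → B a b = 0)
    {k : Fin n ⊕ Fin m → Fin n ⊕ Fin m → ℝ} (hk₀ : ∀ a, k a a = 0) {a b : Fin n ⊕ Fin m}
    (h : B a b * k a b ≠ 0) : busJoined src tgt a b := by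
  by_contra hj
  rcases eq_or_ne a b with rfl | hab
  · simp [hk₀] at h
  · simp [hBzero a b hab hj] at h

theorem sum_susceptance_mul_eq_incA_mulVec (hsym : B.IsSymm) (hne : ∀ e, src e ≠ tgt e)
    (huniq : ∀ e f : Fin E,
      ((src e = src f ∧ tgt e = tgt f) ∨ (src e = tgt f ∧ tgt e = src f)) → e = f)
    (hBzero : ∀ a b, a ≠ b → ¬ busJoined src tgt a b → B a b = 0)
    {k : Fin n ⊕ Fin m → Fin n ⊕ Fin m → ℝ} (hk : ∀ a b, k b a = -k a b) (a : Fin n ⊕ Fin m) :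
    ∑ b, B a b * k a b = (incA src tgt *ᵥ fun e => B (src e) (tgt e) * k (src e) (tgt e)) a := by
  have hk₀ : ∀ a, k a a = 0 := fun a => by linarith [hk a a]
  rw [← sum_eq_sum_incident hne huniq a _ fun b => busJoined_of_mul_ne_zero hBzero hk₀]
  simp only [mulVec, dotProduct, incA, of_apply]
  refine Finset.sum_congr rfl fun e _ => ?_
  split_ifs with hs ht
  · rw [hs, one_mul]
  · rw [← ht, hsym.apply, hk]; ring
  · rw [zero_mul]

theorem sum_susceptance_mul_eq_absAL_mulVec (hsym : B.IsSymm) (hne : ∀ e, src e ≠ tgt e)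
    (huniq : ∀ e f : Fin E,
      ((src e = src f ∧ tgt e = tgt f) ∨ (src e = tgt f ∧ tgt e = src f)) → e = f)
    (hBzero : ∀ a b, a ≠ b → ¬ busJoined src tgt a b → B a b = 0)
    {k : Fin n ⊕ Fin m → Fin n ⊕ Fin m → ℝ} (hk : ∀ a b, k b a = k a b) (hk₀ : ∀ a, k a a = 0)
    (i : Fin n) :
    ∑ b, B (Sum.inl i) b * k (Sum.inl i) b
      = (absAL src tgt *ᵥ fun e => B (src e) (tgt e) * k (src e) (tgt e)) i := by
  rw [← sum_eq_sum_incident hne huniq _ _ fun b => busJoined_of_mul_ne_zero hBzero hk₀]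
  simp only [mulVec, dotProduct, absAL, incA, of_apply]
  refine Finset.sum_congr rfl fun e _ => ?_
  split_ifs with hs ht
  · rw [hs, abs_one, one_mul]
  · rw [← ht, hsym.apply, hk, abs_neg, abs_one, one_mul]
  · rw [abs_zero, zero_mul]

noncomputable def branchStiffness (B : Matrix (Fin n ⊕ Fin m) (Fin n ⊕ Fin m) ℝ) (VG : Fin m → ℝ)
    (src tgt : Fin E → Fin n ⊕ Fin m) : Fin E → ℝ :=
  fun e => Vstar B VG (src e) * Vstar B VG (tgt e) * B (src e) (tgt e)

theorem Dmat_eq_diagonal : Dmat B VG src tgt = diagonal (branchStiffness B VG src tgt) := rfl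

theorem branchStiffness_pos (hVstar : ∀ a, 0 < Vstar B VG a)
    (hBpos : ∀ a b, busJoined src tgt a b → 0 < B a b) (e : Fin E) :
    0 < branchStiffness B VG src tgt e :=
  mul_pos (mul_pos (hVstar _) (hVstar _)) (hBpos _ _ (busJoined_src_tgt e))

theorem hvec_eq_mul (v : Fin n → ℝ) (e : Fin E) :
    hvec src tgt v e = Sum.elim v 1 (src e) * Sum.elim v 1 (tgt e) := by
  unfold hvec
  rcases src e with i | g <;> rcases tgt e with j | g' <;> simp

theorem hvec_pos {v : Fin n → ℝ} (hv : ∀ i, 0 < v i) (e : Fin E) : 0 < hvec src tgt v e := by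
  rw [hvec_eq_mul]
  have hw : ∀ a : Fin n ⊕ Fin m, 0 < Sum.elim v 1 a := by rintro (i | g) <;> simp [hv]
  exact mul_pos (hw _) (hw _)

theorem branch_coeff_eq_branchStiffness_mul_hvec (v : Fin n → ℝ) (e : Fin E) :
    Sum.elim (fun k => VLstar B VG k * v k) VG (src e)
        * Sum.elim (fun k => VLstar B VG k * v k) VG (tgt e) * B (src e) (tgt e)
      = branchStiffness B VG src tgt e * hvec src tgt v e := by
  rw [hvec_eq_mul, branchStiffness]
  rcases src e with i | g <;> rcases tgt e with j | g' <;> simp [Vstar] <;> ring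

theorem psif_apply {P : Fin n ⊕ Fin m → ℝ} {v : Fin n → ℝ}
    (hd : ∀ e, branchStiffness B VG src tgt e ≠ 0) (hh : ∀ e, hvec src tgt v e ≠ 0) (e : Fin E) :
    psif B VG src tgt P v e
      = pflow src tgt P e / (branchStiffness B VG src tgt e * hvec src tgt v e) := by
  rw [psif, Dmat_eq_diagonal, inv_diagonal_of_ne_zero hh, inv_diagonal_of_ne_zero hd,
    diagonal_mul_diagonal, mulVec_diagonal, Pi.inv_apply, Pi.inv_apply, div_eq_mul_inv, mul_inv]
  ring

theorem isUnit_det_Smat (hBLL : (-(BLL B)).PosDef) (hx : ∀ i, VLstar B VG i ≠ 0) :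
    IsUnit (Smat B VG).det := by
  rw [isUnit_iff_ne_zero, Smat, det_smul, det_mul, det_mul, det_diagonal]
  simp [Finset.prod_ne_zero_iff, hx, (isUnit_det_BLL hBLL).ne_zero]

theorem smul_Smat_mulVec (y : Fin n → ℝ) :
    (4 : ℝ) • (Smat B VG *ᵥ y) = VLstar B VG * (BLL B *ᵥ (VLstar B VG * y)) := by
  rw [Smat, smul_mulVec, smul_smul, ← mulVec_mulVec, ← mulVec_mulVec,
    diagonal_mulVec_eq_mul, diagonal_mulVec_eq_mul]
  norm_num

/-- Since `S` is invertible, `f(v) = v` says `diag(v)⁻¹ (t - Q_L) = 4 S (v - 1)` with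
`t = |A|_L D diag(h(v)) u(v)`. -/
theorem fppf_eq_self_iff {P : Fin n ⊕ Fin m → ℝ} {QL v : Fin n → ℝ} (hBLL : (-(BLL B)).PosDef)
    (hx : ∀ i, VLstar B VG i ≠ 0) (hv : ∀ i, v i ≠ 0) :
    fppf B VG src tgt P QL v = v ↔
      QL = (absAL src tgt * Dmat B VG src tgt * diagonal (hvec src tgt v)) *ᵥ uvec B VG src tgt P v
        - VLstar B VG * v * (BLL B *ᵥ (VLstar B VG * (v - 1))) := by
  set t := (absAL src tgt * Dmat B VG src tgt * diagonal (hvec src tgt v)) *ᵥ uvec B VG src tgt P v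
  have hQ : ((Smat B VG)⁻¹ * diagonal QL * (diagonal v)⁻¹) *ᵥ (fun _ => (1 : ℝ))
      = (Smat B VG)⁻¹ *ᵥ (v⁻¹ * QL) := by
    rw [inv_diagonal_of_ne_zero hv, Matrix.mul_assoc, ← mulVec_mulVec, diagonal_mul_diagonal,
      diagonal_mulVec_eq_mul]
    congr 1
    funext i
    simp [mul_comm]
  have ht : ((Smat B VG)⁻¹ * (diagonal v)⁻¹ * absAL src tgt * Dmat B VG src tgt *
      diagonal (hvec src tgt v)) *ᵥ uvec B VG src tgt P v = (Smat B VG)⁻¹ *ᵥ (v⁻¹ * t) := by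
    rw [inv_diagonal_of_ne_zero hv, ← diagonal_mulVec_eq_mul]
    simp only [t, Matrix.mul_assoc, mulVec_mulVec]
  have hf : fppf B VG src tgt P QL v = 1 + (4⁻¹ : ℝ) • ((Smat B VG)⁻¹ *ᵥ (v⁻¹ * (t - QL))) := by
    rw [fppf, hQ, ht, mul_sub, mulVec_sub, smul_sub, ← Pi.one_def]
    abel
  rw [hf, one_add_smul_inv_mulVec_eq_iff (isUnit_det_Smat hBLL hx) (by norm_num), inv_inv,
    smul_Smat_mulVec]
  simp only [funext_iff, Pi.mul_apply, Pi.sub_apply, Pi.inv_apply]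
  refine forall_congr' fun i => ?_
  rw [inv_mul_eq_iff_eq_mul₀ (hv i)]
  constructor <;> intro h <;> linarith

theorem active_balance_iff (hsym : B.IsSymm) (hne : ∀ e, src e ≠ tgt e)
    (huniq : ∀ e f : Fin E,
      ((src e = src f ∧ tgt e = tgt f) ∨ (src e = tgt f ∧ tgt e = src f)) → e = f)
    (hBzero : ∀ a b, a ≠ b → ¬ busJoined src tgt a b → B a b = 0)
    (hacyclic : ∀ p : Fin E → ℝ, incA src tgt *ᵥ p = 0 → p = 0)
    (hconn : ∀ x : Fin n ⊕ Fin m → ℝ, (incA src tgt)ᵀ *ᵥ x = 0 ↔ ∃ c : ℝ, x = fun _ => c)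
    {P : Fin n ⊕ Fin m → ℝ} (hP : ∑ a, P a = 0) {v : Fin n → ℝ}
    (hd : ∀ e, branchStiffness B VG src tgt e ≠ 0) (hh : ∀ e, hvec src tgt v e ≠ 0)
    {V : Fin n ⊕ Fin m → ℝ}
    (hVB : ∀ e, V (src e) * V (tgt e) * B (src e) (tgt e)
      = branchStiffness B VG src tgt e * hvec src tgt v e)
    (θ : Fin n ⊕ Fin m → ℝ) :
    (∀ a, P a = ∑ b, V a * V b * B a b * sin (θ a - θ b)) ↔
      ∀ e, sin (((incA src tgt)ᵀ *ᵥ θ) e) = psif B VG src tgt P v e := by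
  set q : Fin E → ℝ :=
    fun e => B (src e) (tgt e) * (V (src e) * V (tgt e) * sin (θ (src e) - θ (tgt e)))
  have hsum : ∀ a, ∑ b, V a * V b * B a b * sin (θ a - θ b) = (incA src tgt *ᵥ q) a := fun a => by
    rw [← sum_susceptance_mul_eq_incA_mulVec hsym hne huniq hBzero
      (k := fun a b => V a * V b * sin (θ a - θ b))
      (fun a b => by rw [← neg_sub (θ a), sin_neg]; ring)]
    exact Finset.sum_congr rfl fun b _ => by ring
  calc (∀ a, P a = ∑ b, V a * V b * B a b * sin (θ a - θ b))
      ↔ incA src tgt *ᵥ pflow src tgt P = incA src tgt *ᵥ q := by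
        rw [incA_mulVec_pflow hacyclic hconn hP, funext_iff]
        simp only [hsum]
    _ ↔ pflow src tgt P = q := (incA_mulVec_injective hacyclic).eq_iff
    _ ↔ ∀ e, sin (((incA src tgt)ᵀ *ᵥ θ) e) = psif B VG src tgt P v e := by
        simp only [funext_iff, q, psif_apply hd hh, incA_transpose_mulVec_apply hne]
        refine forall_congr' fun e => ?_
        rw [eq_div_iff (mul_ne_zero (hd e) (hh e)), ← hVB, eq_comm]
        constructor <;> intro h <;> linarith

theorem sum_voltage_mul_susceptance_eq (hBLL : (-(BLL B)).PosDef) (v : Fin n → ℝ) (i : Fin n) :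
    ∑ b, Sum.elim (fun k => VLstar B VG k * v k) VG (Sum.inl i)
        * Sum.elim (fun k => VLstar B VG k * v k) VG b * B (Sum.inl i) b
      = (VLstar B VG * v * (BLL B *ᵥ (VLstar B VG * (v - 1)))) i := by
  set x := VLstar B VG
  have hx : ∑ j, B (Sum.inl i) (Sum.inl j) * x j = -∑ g, B (Sum.inl i) (Sum.inr g) * VG g :=
    congrFun (BLL_mulVec_VLstar hBLL) i
  have hloads : ∑ j, x i * v i * (x j * v j) * B (Sum.inl i) (Sum.inl j)
      = x i * v i * ∑ j, B (Sum.inl i) (Sum.inl j) * (x j * v j) := by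
    rw [Finset.mul_sum]; exact Finset.sum_congr rfl fun j _ => by ring
  have hgens : ∑ g, x i * v i * VG g * B (Sum.inl i) (Sum.inr g)
      = x i * v i * ∑ g, B (Sum.inl i) (Sum.inr g) * VG g := by
    rw [Finset.mul_sum]; exact Finset.sum_congr rfl fun g _ => by ring
  rw [Fintype.sum_sum_type]
  simp only [Sum.elim_inl, Sum.elim_inr]
  rw [hloads, hgens]
  simp only [Pi.mul_apply, mulVec, dotProduct, BLL, of_apply, Pi.sub_apply, mul_sub,
    mul_one, Finset.sum_sub_distrib]
  rw [hx]
  ring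

theorem reactive_balance_iff (hsym : B.IsSymm) (hne : ∀ e, src e ≠ tgt e)
    (huniq : ∀ e f : Fin E,
      ((src e = src f ∧ tgt e = tgt f) ∨ (src e = tgt f ∧ tgt e = src f)) → e = f)
    (hBzero : ∀ a b, a ≠ b → ¬ busJoined src tgt a b → B a b = 0)
    (hBLL : (-(BLL B)).PosDef) (hx : ∀ i, VLstar B VG i ≠ 0)
    {P : Fin n ⊕ Fin m → ℝ} {QL v : Fin n → ℝ} (hv : ∀ i, v i ≠ 0)
    {V : Fin n ⊕ Fin m → ℝ} (hV : V = Sum.elim (fun k => VLstar B VG k * v k) VG)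
    {θ : Fin n ⊕ Fin m → ℝ} (hang : ∀ e, |((incA src tgt)ᵀ *ᵥ θ) e| ≤ π / 2)
    (hsin : ∀ e, sin (((incA src tgt)ᵀ *ᵥ θ) e) = psif B VG src tgt P v e) :
    (∀ i, QL i = -∑ b, V (Sum.inl i) * V b * B (Sum.inl i) b * cos (θ (Sum.inl i) - θ b)) ↔
      fppf B VG src tgt P QL v = v := by
  have hVB : ∀ e, V (src e) * V (tgt e) * B (src e) (tgt e)
      = branchStiffness B VG src tgt e * hvec src tgt v e := fun e => by
    rw [hV]; exact branch_coeff_eq_branchStiffness_mul_hvec v e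
  have hcos := sum_susceptance_mul_eq_absAL_mulVec hsym hne huniq hBzero
    (k := fun a b => V a * V b * (1 - cos (θ a - θ b)))
    (fun a b => by rw [← neg_sub (θ a), cos_neg]; ring) (fun a => by simp)
  have hflow :
      (fun e => B (src e) (tgt e) * (V (src e) * V (tgt e) * (1 - cos (θ (src e) - θ (tgt e)))))
      = Dmat B VG src tgt *ᵥ (diagonal (hvec src tgt v) *ᵥ uvec B VG src tgt P v) := by
    funext e
    rw [Dmat_eq_diagonal, diagonal_mulVec_eq_mul, diagonal_mulVec_eq_mul, Pi.mul_apply,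
      Pi.mul_apply, ← incA_transpose_mulVec_apply hne, one_sub_cos_eq_sqrt (hang e) (hsin e), uvec]
    linear_combination (1 - √(1 - psif B VG src tgt P v e ^ 2)) * hVB e
  have hsplit : ∀ i, -∑ b, V (Sum.inl i) * V b * B (Sum.inl i) b * cos (θ (Sum.inl i) - θ b)
      = ∑ b, B (Sum.inl i) b * (V (Sum.inl i) * V b * (1 - cos (θ (Sum.inl i) - θ b)))
        - ∑ b, V (Sum.inl i) * V b * B (Sum.inl i) b := fun i => by
    rw [← Finset.sum_sub_distrib, ← Finset.sum_neg_distrib]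
    exact Finset.sum_congr rfl fun b _ => by ring
  have hload : ∀ i, ∑ b, V (Sum.inl i) * V b * B (Sum.inl i) b
      = (VLstar B VG * v * (BLL B *ᵥ (VLstar B VG * (v - 1)))) i := fun i => by
    rw [hV]; exact sum_voltage_mul_susceptance_eq hBLL v i
  rw [fppf_eq_self_iff hBLL hx hv, funext_iff]
  simp only [hsplit, hcos, hflow, hload, mulVec_mulVec, Matrix.mul_assoc, Pi.sub_apply]

end Network

theorem stmt15_general {n m E : ℕ} (hm : 0 < m)
    (B : Matrix (Fin n ⊕ Fin m) (Fin n ⊕ Fin m) ℝ)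
    (VG : Fin m → ℝ)
    (src tgt : Fin E → Fin n ⊕ Fin m)
    (hsym : Bᵀ = B)
    (hne : ∀ e : Fin E, src e ≠ tgt e)
    (huniq : ∀ e f : Fin E,
      ((src e = src f ∧ tgt e = tgt f) ∨ (src e = tgt f ∧ tgt e = src f)) → e = f)
    (hBpos : ∀ a b : Fin n ⊕ Fin m, busJoined src tgt a b → 0 < B a b)
    (hBzero : ∀ a b : Fin n ⊕ Fin m, a ≠ b → ¬ busJoined src tgt a b → B a b = 0)
    (hBLL : (-(BLL B)).PosDef)
    (hVG : ∀ j, 0 < VG j)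
    (hacyclic : ∀ p : Fin E → ℝ, (incA src tgt).mulVec p = 0 → p = 0)
    (hconn : ∀ x : Fin n ⊕ Fin m → ℝ,
      (incA src tgt)ᵀ.mulVec x = 0 ↔ ∃ c : ℝ, x = fun _ => c)
    (P : Fin n ⊕ Fin m → ℝ)
    (hP : ∑ a, P a = 0)
    (QL : Fin n → ℝ)
    (v : Fin n → ℝ) (hv : ∀ i, 0 < v i)
    (V : Fin n ⊕ Fin m → ℝ)
    (hV : V = Sum.elim (fun k => VLstar B VG k * v k) VG) :
    ((∃ θ : Fin n ⊕ Fin m → ℝ,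
        (∀ e : Fin E, |(incA src tgt)ᵀ.mulVec θ e| ≤ Real.pi / 2)
        ∧ (∀ a : Fin n ⊕ Fin m,
            P a = ∑ b : Fin n ⊕ Fin m, V a * V b * B a b * Real.sin (θ a - θ b))
        ∧ (∀ i : Fin n,
            QL i = -(∑ b : Fin n ⊕ Fin m,
              V (Sum.inl i) * V b * B (Sum.inl i) b * Real.cos (θ (Sum.inl i) - θ b))))
      ↔ ((∀ e : Fin E, |psif B VG src tgt P v e| ≤ 1)
          ∧ fppf B VG src tgt P QL v = v))
    ∧
    (∀ θ : Fin n ⊕ Fin m → ℝ,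
      ((∀ e : Fin E, |(incA src tgt)ᵀ.mulVec θ e| ≤ Real.pi / 2)
        ∧ (∀ a : Fin n ⊕ Fin m,
            P a = ∑ b : Fin n ⊕ Fin m, V a * V b * B a b * Real.sin (θ a - θ b))
        ∧ (∀ i : Fin n,
            QL i = -(∑ b : Fin n ⊕ Fin m,
              V (Sum.inl i) * V b * B (Sum.inl i) b * Real.cos (θ (Sum.inl i) - θ b)))) →
      ∀ e : Fin E, Real.sin ((incA src tgt)ᵀ.mulVec θ e) = psif B VG src tgt P v e) := by
  have hx : ∀ i, 0 < VLstar B VG i := VLstar_pos hm hne hBpos hBzero hBLL hVG hconn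
  have hd : ∀ e, branchStiffness B VG src tgt e ≠ 0 := fun e =>
    (branchStiffness_pos (Sum.rec hx hVG) hBpos e).ne'
  have hh : ∀ e, hvec src tgt v e ≠ 0 := fun e => (hvec_pos hv e).ne'
  have hactive := active_balance_iff (V := V) hsym hne huniq hBzero hacyclic hconn hP hd hh
    fun e => by rw [hV]; exact branch_coeff_eq_branchStiffness_mul_hvec v e
  have hreactive := fun θ => reactive_balance_iff (P := P) (QL := QL) (θ := θ) hsym hne huniq
    hBzero hBLL (fun i => (hx i).ne') (fun i => (hv i).ne') hV
  refine ⟨⟨?_, ?_⟩, fun θ hθ => (hactive θ).1 hθ.2.1⟩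
  · rintro ⟨θ, hang, hPθ, hQθ⟩
    have hsin := (hactive θ).1 hPθ
    exact ⟨fun e => hsin e ▸ abs_sin_le_one _, (hreactive θ hang hsin).1 hQθ⟩
  · rintro ⟨hψ, hfix⟩
    obtain ⟨θ, hθ⟩ := transpose_mulVec_surjective (incA_mulVec_injective hacyclic)
      fun e => arcsin (psif B VG src tgt P v e)
    have hang : ∀ e, |((incA src tgt)ᵀ *ᵥ θ) e| ≤ π / 2 := fun e => by
      rw [hθ]; exact abs_le.2 ⟨neg_pi_div_two_le_arcsin _, arcsin_le_pi_div_two _⟩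
    have hsin : ∀ e, sin (((incA src tgt)ᵀ *ᵥ θ) e) = psif B VG src tgt P v e := fun e => by
      rw [hθ]; exact sin_arcsin (abs_le.1 (hψ e)).1 (abs_le.1 (hψ e)).2
    exact ⟨θ, hang, (hactive θ).2 hsin, (hreactive θ hang hsin).2 hfix⟩

/-- Fixed-point power flow for radial networks (Corollary 2 of the paper):
fix positive scaled voltages v and set V_L = diag(V_L*) v. There exists θ with
branch-wise angle differences at most π/2 in absolute value such that (θ, V_L)
solves the lossless power flow equations iff |ψ(v)_e| ≤ 1 on every branch and
f(v) = v; moreover, any such θ satisfies sin((Aᵀθ)_e) = ψ(v)_e on every branch. -/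
theorem stmt15 {n m E : ℕ} (hn : 0 < n) (hm : 0 < m)
    (B : Matrix (Fin n ⊕ Fin m) (Fin n ⊕ Fin m) ℝ)
    (VG : Fin m → ℝ)
    (src tgt : Fin E → Fin n ⊕ Fin m)
    (hsym : Bᵀ = B)
    (hne : ∀ e : Fin E, src e ≠ tgt e)
    (huniq : ∀ e f : Fin E,
      ((src e = src f ∧ tgt e = tgt f) ∨ (src e = tgt f ∧ tgt e = src f)) → e = f)
    (horient : ∀ (e : Fin E) (i : Fin n) (j : Fin m),
      ¬(src e = Sum.inl i ∧ tgt e = Sum.inr j))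
    (hBpos : ∀ a b : Fin n ⊕ Fin m, busJoined src tgt a b → 0 < B a b)
    (hBzero : ∀ a b : Fin n ⊕ Fin m, a ≠ b → ¬ busJoined src tgt a b → B a b = 0)
    (hBLL : (-(BLL B)).PosDef)
    (hVG : ∀ j, 0 < VG j)
    (hacyclic : ∀ p : Fin E → ℝ, (incA src tgt).mulVec p = 0 → p = 0)
    (hconn : ∀ x : Fin n ⊕ Fin m → ℝ,
      (incA src tgt)ᵀ.mulVec x = 0 ↔ ∃ c : ℝ, x = fun _ => c)
    (P : Fin n ⊕ Fin m → ℝ)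
    (hP : ∑ a, P a = 0)
    (QL : Fin n → ℝ)
    (v : Fin n → ℝ) (hv : ∀ i, 0 < v i)
    (V : Fin n ⊕ Fin m → ℝ)
    (hV : V = Sum.elim (fun k => VLstar B VG k * v k) VG) :
    ((∃ θ : Fin n ⊕ Fin m → ℝ,
        (∀ e : Fin E, |(incA src tgt)ᵀ.mulVec θ e| ≤ Real.pi / 2)
        ∧ (∀ a : Fin n ⊕ Fin m,
            P a = ∑ b : Fin n ⊕ Fin m, V a * V b * B a b * Real.sin (θ a - θ b))
        ∧ (∀ i : Fin n,
            QL i = -(∑ b : Fin n ⊕ Fin m,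
              V (Sum.inl i) * V b * B (Sum.inl i) b * Real.cos (θ (Sum.inl i) - θ b))))
      ↔ ((∀ e : Fin E, |psif B VG src tgt P v e| ≤ 1)
          ∧ fppf B VG src tgt P QL v = v))
    ∧
    (∀ θ : Fin n ⊕ Fin m → ℝ,
      ((∀ e : Fin E, |(incA src tgt)ᵀ.mulVec θ e| ≤ Real.pi / 2)
        ∧ (∀ a : Fin n ⊕ Fin m,
            P a = ∑ b : Fin n ⊕ Fin m, V a * V b * B a b * Real.sin (θ a - θ b))
        ∧ (∀ i : Fin n,
            QL i = -(∑ b : Fin n ⊕ Fin m,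
              V (Sum.inl i) * V b * B (Sum.inl i) b * Real.cos (θ (Sum.inl i) - θ b)))) →
      ∀ e : Fin E, Real.sin ((incA src tgt)ᵀ.mulVec θ e) = psif B VG src tgt P v e) :=
  stmt15_general hm B VG src tgt hsym hne huniq hBpos hBzero hBLL hVG hacyclic hconn P hP QL v hv V
    hV
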